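/- Let K be a 1×2 real matrix and let P, Q be symmetric 2×2 real matrices with Q positive definite and (A₁+B₁K)ᵀP + P(A₁+B₁K) = −Q. Suppose moreover that for some M₀ > 0 and all T ∈ [0,1] and z ∈ ℝ², zᵀ(A(T)+B(T)K)ᵀ P (A(T)+B(T)K) z − zᵀPz ≤ −λ_min(Q) T ‖z‖² + M₀ T² ‖z‖². Then there exist c > 0 and M > 0 such that for all T ∈ [0,1], all z ∈ ℝ² and all e ∈ ℝ, writing x⁺ := (A(T)+B(T)K) z − B(T) e, one has x⁺ᵀ P x⁺ − zᵀ P z ≤ −(λ_min(Q)/2) T ‖z‖² + c T e² + M T² (‖z‖² + e²). -/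

import Mathlib

open Matrix

def A1 : Matrix (Fin 2) (Fin 2) ℝ := !![0, 1; 0, 0]
def B1 : Matrix (Fin 2) (Fin 1) ℝ := !![0; 1]
noncomputable def B2 : Matrix (Fin 2) (Fin 1) ℝ := !![1/2; 0]

/-- A(T) = I + A₁T. -/
noncomputable def AT (T : ℝ) : Matrix (Fin 2) (Fin 2) ℝ := 1 + T • A1

/-- B(T) = B₁T + B₂T². -/
noncomputable def BT (T : ℝ) : Matrix (Fin 2) (Fin 1) ℝ := T • B1 + T ^ 2 • B2

/-!
Write `A(T) + B(T) K = 1 + T G(T)` and `B(T) = T V(T)` with `V(T) = B₁ + T B₂`, both continuous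
in `T`. Expanding the quadratic form of `P` at `x⁺ = (1 + T G) z - T V e` gives the nominal
difference, which decreases by `λ T ‖z‖²`, plus a cross term `T ⟪z, (P + Pᵀ) V e⟫` and terms of
order `T²`. Young's inequality with weight `λ` spends half of the decrease on the cross term,
at the price of `c T e²`; every remaining term is `O(T²) (‖z‖² + e²)` because `G` and `V` are
bounded on the compact interval `[0, 1]`. Finally `λ > 0` since a positive definite `Q`
dominates a positive multiple of the identity.
-/

variable {m n : Type*} [Fintype m] [Fintype n]

theorem two_mul_dotProduct_le {ε : ℝ} (hε : 0 < ε) (x y : n → ℝ) :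
    2 * (x ⬝ᵥ y) ≤ ε * (x ⬝ᵥ x) + ε⁻¹ * (y ⬝ᵥ y) := by
  simp only [dotProduct, Finset.mul_sum, ← Finset.sum_add_distrib]
  gcongr with i
  refine le_of_mul_le_mul_left ?_ hε
  rw [mul_add, ← mul_assoc ε ε⁻¹, mul_inv_cancel₀ hε.ne']
  linear_combination sq_nonneg (ε * x i - y i)

theorem mulVec_dotProduct_mulVec_le_sum_sq_mul (A : Matrix m n ℝ) (x : n → ℝ) :
    (A *ᵥ x) ⬝ᵥ (A *ᵥ x) ≤ (∑ i, ∑ j, A i j ^ 2) * (x ⬝ᵥ x) := by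
  simp only [dotProduct, mulVec]
  rw [Finset.sum_mul]
  refine Finset.sum_le_sum fun i _ ↦ ?_
  simpa only [sq] using Finset.sum_mul_sq_le_sq_mul_sq Finset.univ (A i) x

theorem exists_mulVec_dotProduct_mulVec_le_of_continuousOn {α : Type*} [TopologicalSpace α]
    {s : Set α} (hs : IsCompact s) {A : α → Matrix m n ℝ} (hA : ContinuousOn A s) :
    ∃ C > 0, ∀ t ∈ s, ∀ x, (A t *ᵥ x) ⬝ᵥ (A t *ᵥ x) ≤ C * (x ⬝ᵥ x) := by
  obtain ⟨C, hC⟩ :=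
    hs.exists_bound_of_continuousOn (f := fun t ↦ ∑ i, ∑ j, A t i j ^ 2) (by fun_prop)
  refine ⟨max C 0 + 1, by positivity,
    fun t ht x ↦ (mulVec_dotProduct_mulVec_le_sum_sq_mul _ x).trans ?_⟩
  gcongr
  · exact dotProduct_self_star_nonneg x
  · linarith [(Real.le_norm_self _).trans (hC t ht), le_max_left C 0]

/-- The Rayleigh quotient is scale invariant and attains a positive minimum on the unit sphere. -/
theorem Matrix.PosDef.exists_pos_mul_dotProduct_self_le {Q : Matrix n n ℝ} (hQ : Q.PosDef) :
    ∃ ε > 0, ∀ z : n → ℝ, ε * (z ⬝ᵥ z) ≤ z ⬝ᵥ (Q *ᵥ z) := by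
  rcases isEmpty_or_nonempty n with hn | hn
  · exact ⟨1, one_pos, fun z ↦ by simp [dotProduct]⟩
  let f : (n → ℝ) → ℝ := fun z ↦ z ⬝ᵥ (Q *ᵥ z) / (z ⬝ᵥ z)
  have hpos : ∀ z : n → ℝ, z ≠ 0 → 0 < z ⬝ᵥ z := fun z hz ↦ by
    simpa using dotProduct_self_star_pos_iff.2 hz
  have hf_smul : ∀ (c : ℝ) (z : n → ℝ), c ≠ 0 → f (c • z) = f z := fun c z hc ↦ by
    simp only [f, mulVec_smul, smul_dotProduct, dotProduct_smul, smul_eq_mul, ← mul_assoc]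
    exact mul_div_mul_left _ _ (mul_ne_zero hc hc)
  have hsphere : ∀ z ∈ Metric.sphere (0 : n → ℝ) 1, z ≠ 0 := fun z hz h ↦ by simp [h] at hz
  obtain ⟨w, hw, hmin⟩ := (isCompact_sphere (0 : n → ℝ) 1).exists_isMinOn
    (NormedSpace.sphere_nonempty.2 zero_le_one) (f := f)
    (ContinuousOn.div (by fun_prop) (by fun_prop) fun z hz ↦ (hpos z (hsphere z hz)).ne')
  refine ⟨f w, div_pos (by simpa using hQ.dotProduct_mulVec_pos (hsphere w hw))
    (hpos w (hsphere w hw)), fun z ↦ ?_⟩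
  rcases eq_or_ne z 0 with rfl | hz
  · simp
  have hnorm : ‖z‖⁻¹ • z ∈ Metric.sphere (0 : n → ℝ) 1 := by
    simp [norm_smul, norm_ne_zero_iff.2 hz]
  have hle : f w ≤ f z := hf_smul _ z (inv_ne_zero (norm_ne_zero_iff.2 hz)) ▸ hmin hnorm
  calc f w * (z ⬝ᵥ z) ≤ f z * (z ⬝ᵥ z) := mul_le_mul_of_nonneg_right hle (hpos z hz).le
    _ = z ⬝ᵥ (Q *ᵥ z) := div_mul_cancel₀ _ (hpos z hz).ne'

theorem sub_smul_dotProduct_mulVec_sub_smul (P : Matrix n n ℝ) (y w : n → ℝ) (t : ℝ) :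
    (y - t • w) ⬝ᵥ (P *ᵥ (y - t • w)) =
      y ⬝ᵥ (P *ᵥ y) - t * (y ⬝ᵥ ((P + Pᵀ) *ᵥ w)) + t ^ 2 * (w ⬝ᵥ (P *ᵥ w)) := by
  have htr : y ⬝ᵥ (Pᵀ *ᵥ w) = w ⬝ᵥ (P *ᵥ y) := by
    rw [dotProduct_mulVec, vecMul_transpose, dotProduct_comm]
  simp only [mulVec_sub, mulVec_smul, sub_dotProduct, dotProduct_sub, smul_dotProduct,
    dotProduct_smul, add_mulVec, dotProduct_add, htr, smul_eq_mul]
  ring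

theorem input_error_quadratic_form_le [DecidableEq n] (P G : Matrix n n ℝ) (V : Matrix n m ℝ)
    {T lam CS CG CV CP : ℝ} (hT : 0 ≤ T) (hlam : 0 < lam)
    (hS : ∀ u, (((P + Pᵀ) * V) *ᵥ u) ⬝ᵥ (((P + Pᵀ) * V) *ᵥ u) ≤ CS * (u ⬝ᵥ u))
    (hG : ∀ z, (G *ᵥ z) ⬝ᵥ (G *ᵥ z) ≤ CG * (z ⬝ᵥ z))
    (hV : ∀ u, (V *ᵥ u) ⬝ᵥ (V *ᵥ u) ≤ CV * (u ⬝ᵥ u))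
    (hP : ∀ u, ((P * V) *ᵥ u) ⬝ᵥ ((P * V) *ᵥ u) ≤ CP * (u ⬝ᵥ u)) (z : n → ℝ) (u : m → ℝ) :
    ((1 + T • G) *ᵥ z - (T • V) *ᵥ u) ⬝ᵥ (P *ᵥ ((1 + T • G) *ᵥ z - (T • V) *ᵥ u))
      ≤ ((1 + T • G) *ᵥ z) ⬝ᵥ (P *ᵥ ((1 + T • G) *ᵥ z))
        + T * (lam / 2 * (z ⬝ᵥ z) + CS / (2 * lam) * (u ⬝ᵥ u))
        + T ^ 2 * ((CG * (z ⬝ᵥ z) + (CS + CV + CP) * (u ⬝ᵥ u)) / 2) := by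
  set w := V *ᵥ u
  set s := (P + Pᵀ) *ᵥ w
  have hcross : ((1 + T • G) *ᵥ z) ⬝ᵥ s = z ⬝ᵥ s + T * ((G *ᵥ z) ⬝ᵥ s) := by
    simp only [add_mulVec, one_mulVec, smul_mulVec, add_dotProduct, smul_dotProduct, smul_eq_mul]
  rw [smul_mulVec, sub_smul_dotProduct_mulVec_sub_smul, hcross]
  have hs : s ⬝ᵥ s ≤ CS * (u ⬝ᵥ u) := by simpa only [s, w, mulVec_mulVec] using hS u
  have hPw : (P *ᵥ w) ⬝ᵥ (P *ᵥ w) ≤ CP * (u ⬝ᵥ u) := by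
    simpa only [w, mulVec_mulVec] using hP u
  have hz : -(z ⬝ᵥ s) ≤ lam / 2 * (z ⬝ᵥ z) + CS / (2 * lam) * (u ⬝ᵥ u) := by
    have young := two_mul_dotProduct_le hlam z (-s)
    simp only [dotProduct_neg, neg_dotProduct, neg_neg] at young
    have := mul_le_mul_of_nonneg_left hs (inv_nonneg.2 hlam.le)
    rw [show CS / (2 * lam) = lam⁻¹ * CS / 2 by field_simp]
    linarith
  have hGz : -((G *ᵥ z) ⬝ᵥ s) ≤ (CG * (z ⬝ᵥ z) + CS * (u ⬝ᵥ u)) / 2 := by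
    have young := two_mul_dotProduct_le one_pos (G *ᵥ z) (-s)
    simp only [dotProduct_neg, neg_dotProduct, neg_neg, inv_one, one_mul] at young
    linarith [hG z]
  have hw : w ⬝ᵥ (P *ᵥ w) ≤ (CV + CP) * (u ⬝ᵥ u) / 2 := by
    have young := two_mul_dotProduct_le one_pos w (P *ᵥ w)
    simp only [inv_one, one_mul] at young
    linarith [hV u]
  linarith [mul_le_mul_of_nonneg_left hz hT, mul_le_mul_of_nonneg_left hGz (sq_nonneg T),
    mul_le_mul_of_nonneg_left hw (sq_nonneg T)]

theorem exists_quadratic_decrease_with_input_error [DecidableEq n] (P : Matrix n n ℝ)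
    {G : ℝ → Matrix n n ℝ} {V : ℝ → Matrix n m ℝ} (hG : ContinuousOn G (Set.Icc 0 1))
    (hV : ContinuousOn V (Set.Icc 0 1)) {lam M₀ : ℝ} (hlam : 0 < lam)
    (hdecr : ∀ T ∈ Set.Icc (0 : ℝ) 1, ∀ z : n → ℝ,
      ((1 + T • G T) *ᵥ z) ⬝ᵥ (P *ᵥ ((1 + T • G T) *ᵥ z)) - z ⬝ᵥ (P *ᵥ z)
        ≤ -lam * T * (z ⬝ᵥ z) + M₀ * T ^ 2 * (z ⬝ᵥ z)) :
    ∃ c M : ℝ, 0 < c ∧ 0 < M ∧ ∀ T ∈ Set.Icc (0 : ℝ) 1, ∀ (z : n → ℝ) (u : m → ℝ),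
      ((1 + T • G T) *ᵥ z - (T • V T) *ᵥ u) ⬝ᵥ (P *ᵥ ((1 + T • G T) *ᵥ z - (T • V T) *ᵥ u))
          - z ⬝ᵥ (P *ᵥ z)
        ≤ -(lam / 2) * T * (z ⬝ᵥ z) + c * T * (u ⬝ᵥ u) + M * T ^ 2 * (z ⬝ᵥ z + u ⬝ᵥ u) := by
  have hI := isCompact_Icc (a := (0 : ℝ)) (b := 1)
  obtain ⟨CS, hCS, boundS⟩ := exists_mulVec_dotProduct_mulVec_le_of_continuousOn hI
    (A := fun T ↦ (P + Pᵀ) * V T) (by fun_prop)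
  obtain ⟨CG, hCG, boundG⟩ := exists_mulVec_dotProduct_mulVec_le_of_continuousOn hI hG
  obtain ⟨CV, hCV, boundV⟩ := exists_mulVec_dotProduct_mulVec_le_of_continuousOn hI hV
  obtain ⟨CP, hCP, boundP⟩ := exists_mulVec_dotProduct_mulVec_le_of_continuousOn hI
    (A := fun T ↦ P * V T) (by fun_prop)
  refine ⟨CS / (2 * lam), max M₀ 0 + (CS + CG + CV + CP) / 2, by positivity, by positivity,
    fun T hT z u ↦ ?_⟩
  have hzz : 0 ≤ z ⬝ᵥ z := by simpa using dotProduct_self_star_nonneg z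
  have huu : 0 ≤ u ⬝ᵥ u := by simpa using dotProduct_self_star_nonneg u
  have hM₀ : M₀ ≤ max M₀ 0 := le_max_left _ _
  have hM₀' : 0 ≤ max M₀ 0 := le_max_right _ _
  linarith [hdecr T hT z, input_error_quadratic_form_le P (G T) (V T) hT.1 hlam (boundS T hT)
      (boundG T hT) (boundV T hT) (boundP T hT) z u,
    mul_nonneg (mul_nonneg (sq_nonneg T) hzz) (sub_nonneg.2 hM₀),
    mul_nonneg (mul_nonneg (sq_nonneg T) huu) hM₀',
    mul_nonneg (mul_nonneg (sq_nonneg T) hzz) (by positivity : 0 ≤ CS + CV + CP),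
    mul_nonneg (mul_nonneg (sq_nonneg T) huu) hCG.le]

theorem BT_eq_smul (T : ℝ) : BT T = T • (B1 + T • B2) := by
  rw [BT, smul_add, smul_smul, sq]

theorem AT_add_BT_mul (K : Matrix (Fin 1) (Fin 2) ℝ) (T : ℝ) :
    AT T + BT T * K = 1 + T • (A1 + (B1 + T • B2) * K) := by
  rw [AT, BT_eq_smul, Matrix.smul_mul, smul_add, add_assoc]

theorem lyapunov_decrease_with_input_error_general
    (K : Matrix (Fin 1) (Fin 2) ℝ) (P Q : Matrix (Fin 2) (Fin 2) ℝ)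
    (hQ : Q.PosDef)
    (lamQ : ℝ)
    (hlamQ : IsGreatest {l : ℝ | ∀ z : Fin 2 → ℝ, l * (z ⬝ᵥ z) ≤ z ⬝ᵥ (Q *ᵥ z)} lamQ)
    (M₀ : ℝ)
    (hyp : ∀ T ∈ Set.Icc (0 : ℝ) 1, ∀ z : Fin 2 → ℝ,
      ((AT T + BT T * K) *ᵥ z) ⬝ᵥ (P *ᵥ ((AT T + BT T * K) *ᵥ z)) - z ⬝ᵥ (P *ᵥ z)
        ≤ -lamQ * T * (z ⬝ᵥ z) + M₀ * T ^ 2 * (z ⬝ᵥ z)) :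
    ∃ c M : ℝ, 0 < c ∧ 0 < M ∧
      ∀ T ∈ Set.Icc (0 : ℝ) 1, ∀ z : Fin 2 → ℝ, ∀ e : ℝ,
        ((AT T + BT T * K) *ᵥ z - BT T *ᵥ (fun _ => e)) ⬝ᵥ
            (P *ᵥ ((AT T + BT T * K) *ᵥ z - BT T *ᵥ (fun _ => e))) - z ⬝ᵥ (P *ᵥ z)
          ≤ -(lamQ / 2) * T * (z ⬝ᵥ z) + c * T * e ^ 2 + M * T ^ 2 * (z ⬝ᵥ z + e ^ 2) := by
  obtain ⟨ε, hε, hεQ⟩ := hQ.exists_pos_mul_dotProduct_self_le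
  have hlamQ_pos : 0 < lamQ := hε.trans_le (hlamQ.2 hεQ)
  simp only [AT_add_BT_mul] at hyp ⊢
  simp only [BT_eq_smul]
  obtain ⟨c, M, hc, hM, hbound⟩ := exists_quadratic_decrease_with_input_error P
    (G := fun T ↦ A1 + (B1 + T • B2) * K) (V := fun T ↦ B1 + T • B2) (by fun_prop) (by fun_prop)
    hlamQ_pos hyp
  refine ⟨c, M, hc, hM, fun T hT z e ↦ ?_⟩
  have he : (fun _ : Fin 1 ↦ e) ⬝ᵥ (fun _ ↦ e) = e ^ 2 := by simp [dotProduct, sq]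
  simpa only [he] using hbound T hT z (fun _ ↦ e)

theorem lyapunov_decrease_with_input_error
    (K : Matrix (Fin 1) (Fin 2) ℝ) (P Q : Matrix (Fin 2) (Fin 2) ℝ)
    (hPs : P.IsSymm) (hQs : Q.IsSymm) (hQ : Q.PosDef)
    (hLyap : (A1 + B1 * K)ᵀ * P + P * (A1 + B1 * K) = -Q)
    (lamQ : ℝ)
    (hlamQ : IsGreatest {l : ℝ | ∀ z : Fin 2 → ℝ, l * (z ⬝ᵥ z) ≤ z ⬝ᵥ (Q *ᵥ z)} lamQ)
    (M₀ : ℝ) (hM₀ : 0 < M₀)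
    (hyp : ∀ T ∈ Set.Icc (0 : ℝ) 1, ∀ z : Fin 2 → ℝ,
      ((AT T + BT T * K) *ᵥ z) ⬝ᵥ (P *ᵥ ((AT T + BT T * K) *ᵥ z)) - z ⬝ᵥ (P *ᵥ z)
        ≤ -lamQ * T * (z ⬝ᵥ z) + M₀ * T ^ 2 * (z ⬝ᵥ z)) :
    ∃ c M : ℝ, 0 < c ∧ 0 < M ∧
      ∀ T ∈ Set.Icc (0 : ℝ) 1, ∀ z : Fin 2 → ℝ, ∀ e : ℝ,
        ((AT T + BT T * K) *ᵥ z - BT T *ᵥ (fun _ => e)) ⬝ᵥ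
            (P *ᵥ ((AT T + BT T * K) *ᵥ z - BT T *ᵥ (fun _ => e))) - z ⬝ᵥ (P *ᵥ z)
          ≤ -(lamQ / 2) * T * (z ⬝ᵥ z) + c * T * e ^ 2 + M * T ^ 2 * (z ⬝ᵥ z + e ^ 2) :=
  lyapunov_decrease_with_input_error_general K P Q hQ lamQ hlamQ M₀ hyp
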